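/- arXiv:2305.19251 — 5 statements merged into one kernel-verified Lean document; each statement's English description precedes it below -/
import Mathlib

section
/- Let X be a finite set, S_1, …, S_m subsets of X, and 1 ≤ l ≤ m. Let (I_j)_{j=0}^{l} be a greedy index sequence. Then for every set J ⊆ {1, …, m} with |J| = l it holds that |⋃_{i ∈ I_l} S_i| ≥ (1 − 1/e) · |⋃_{i ∈ J} S_i|; that is, the greedy algorithm is a (1 − 1/e)-approximation for Maximum Coverage under exact cardinality constraints (MCP-ECC). -/
/-!
Write `f A = |⋃_{i ∈ A} S_i|` and `OPT = f J`. Every element of `⋃_J S_i` not yet covered by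
`I_j` lies in some `S_i \ ⋃_{I_j} S` with `i ∈ J`, so one of the `l` sets of `J` adds at least
`(OPT - f I_j) / l` new elements, and the greedy choice adds at least as many. Hence the gap
`OPT - f I_j` shrinks by a factor `1 - 1/l` in each step, and after `l` steps it is at most
`(1 - 1/l)^l · OPT ≤ OPT / e`.
-/

open Finset

section Coverage

variable {ι α : Type*} [DecidableEq α] (S : ι → Finset α)

theorem card_biUnion_insert [DecidableEq ι] (A : Finset ι) (i : ι) :
    ((insert i A).biUnion S).card = (S i \ A.biUnion S).card + (A.biUnion S).card := by
  rw [biUnion_insert, ← card_sdiff_add_card_eq_card subset_union_right, union_sdiff_right]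

theorem biUnion_sdiff (J : Finset ι) (B : Finset α) :
    J.biUnion S \ B = J.biUnion fun i => S i \ B := by
  ext x
  simp only [mem_sdiff, mem_biUnion]
  tauto

theorem card_biUnion_le_card_biUnion_add_sum_card_sdiff (A J : Finset ι) :
    (J.biUnion S).card ≤ (A.biUnion S).card + ∑ i ∈ J, (S i \ A.biUnion S).card :=
  calc (J.biUnion S).card ≤ (J.biUnion S \ A.biUnion S).card + (A.biUnion S).card :=
        card_le_card_sdiff_add_card
    _ ≤ ∑ i ∈ J, (S i \ A.biUnion S).card + (A.biUnion S).card := by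
        rw [biUnion_sdiff]
        exact Nat.add_le_add_right card_biUnion_le _
    _ = _ := Nat.add_comm _ _

variable [DecidableEq ι] {A : Finset ι} {i : ι}
  (hbest : ∀ i' ∉ A, ((insert i' A).biUnion S).card ≤ ((insert i A).biUnion S).card)
include hbest

theorem card_sdiff_biUnion_le_of_greedy (i' : ι) :
    (S i' \ A.biUnion S).card ≤ (S i \ A.biUnion S).card := by
  by_cases hi' : i' ∈ A
  · rw [sdiff_eq_empty_iff_subset.2 (subset_biUnion_of_mem S hi'), card_empty]
    exact Nat.zero_le _
  · have := hbest i' hi'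
    rw [card_biUnion_insert, card_biUnion_insert] at this
    omega

theorem card_biUnion_le_add_card_mul_of_greedy (J : Finset ι) :
    (J.biUnion S).card ≤ (A.biUnion S).card + J.card * (S i \ A.biUnion S).card :=
  (card_biUnion_le_card_biUnion_add_sum_card_sdiff S A J).trans <| Nat.add_le_add_left
    (sum_le_card_nsmul _ _ _ fun i' _ => card_sdiff_biUnion_le_of_greedy S hbest i') _

theorem sub_card_biUnion_insert_le_of_greedy (J : Finset ι) :
    ((J.biUnion S).card : ℝ) - ((insert i A).biUnion S).card ≤
      (1 - 1 / J.card) * (((J.biUnion S).card : ℝ) - (A.biUnion S).card) := by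
  have hcover : ((J.biUnion S).card : ℝ) ≤
      (A.biUnion S).card + J.card * (S i \ A.biUnion S).card := by
    exact_mod_cast card_biUnion_le_add_card_mul_of_greedy S hbest J
  have hgain : (((J.biUnion S).card : ℝ) - (A.biUnion S).card) / J.card ≤
      (S i \ A.biUnion S).card :=
    div_le_of_le_mul₀ (Nat.cast_nonneg _) (Nat.cast_nonneg _) (by linarith)
  rw [card_biUnion_insert, Nat.cast_add, sub_mul, one_mul, one_div_mul_eq_div]
  linarith

end Coverage

theorem greedy_mcp_ecc_general {α : Type*} [DecidableEq α] (m l : ℕ)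
    (hl1 : 1 ≤ l)
    (S : Fin m → Finset α)
    (I : ℕ → Finset (Fin m)) (hI0 : I 0 = ∅)
    (hgreedy : ∀ j < l, ∃ i ∉ I j, I (j + 1) = insert i (I j) ∧
      ∀ i' ∉ I j, ((insert i' (I j)).biUnion S).card ≤ ((insert i (I j)).biUnion S).card) :
    ∀ J : Finset (Fin m), J.card = l →
      (1 - 1 / Real.exp 1) * ((J.biUnion S).card : ℝ) ≤ (((I l).biUnion S).card : ℝ) := by
  intro J hJ
  have hl : (1 : ℝ) ≤ l := by exact_mod_cast hl1
  have gap : ((J.biUnion S).card : ℝ) - ((I l).biUnion S).card ≤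
      (1 - 1 / l) ^ l * (((J.biUnion S).card : ℝ) - ((I 0).biUnion S).card) := by
    refine le_geom (u := fun j => ((J.biUnion S).card : ℝ) - ((I j).biUnion S).card)
      (sub_nonneg.2 (div_le_one_of_le₀ hl (Nat.cast_nonneg _))) l fun j hj => ?_
    obtain ⟨i, -, hstep, hbest⟩ := hgreedy j hj
    rw [hstep, ← hJ]
    exact sub_card_biUnion_insert_le_of_greedy S hbest J
  have hpow : (1 - 1 / l : ℝ) ^ l ≤ 1 / Real.exp 1 := by
    rw [one_div (Real.exp 1), ← Real.exp_neg]
    exact Real.one_sub_div_pow_le_exp_neg hl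
  rw [hI0, biUnion_empty, card_empty, Nat.cast_zero, sub_zero] at gap
  linarith [mul_le_mul_of_nonneg_right hpow (Nat.cast_nonneg (α := ℝ) (J.biUnion S).card)]

/-- The greedy algorithm is a (1 - 1/e)-approximation for Maximum
Coverage under exact cardinality constraints (MCP-ECC). -/
theorem greedy_mcp_ecc {α : Type*} [DecidableEq α] (X : Finset α) (m l : ℕ)
    (hl1 : 1 ≤ l) (hlm : l ≤ m)
    (S : Fin m → Finset α) (hSX : ∀ i, S i ⊆ X)
    (I : ℕ → Finset (Fin m)) (hI0 : I 0 = ∅)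
    (hgreedy : ∀ j < l, ∃ i ∉ I j, I (j + 1) = insert i (I j) ∧
      ∀ i' ∉ I j, ((insert i' (I j)).biUnion S).card ≤ ((insert i (I j)).biUnion S).card) :
    ∀ J : Finset (Fin m), J.card = l →
      (1 - 1 / Real.exp 1) * ((J.biUnion S).card : ℝ) ≤ (((I l).biUnion S).card : ℝ) :=
  greedy_mcp_ecc_general m l hl1 S I hI0 hgreedy
end

section
/- Let G be a finite simple undirected graph with n vertices, k ≥ 1 an integer, and (A_p)_{p=0}^{n-1} a greedy sequence for dom. Then the quantities θ_p = ext(A_p)/p are nonincreasing and the quantities σ_p = ext(A_p)/(n − p) are nondecreasing; explicitly, for every 1 ≤ p ≤ n − 2, p · ext(A_{p+1}) ≤ (p + 1) · ext(A_p) and (n − p − 1) · ext(A_p) ≤ (n − p) · ext(A_{p+1}). -/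
/-!
Domination counts form a coverage function, which is submodular; since each greedy vertex was
already a candidate one step earlier, the greedy gains `dom(A_{i+1}) - dom(A_i)` are
nonincreasing, so `ext(A_p) = ∑_{i<p} (gain_i - 1)` has nonincreasing increments and vanishes at
`0`. Hence the increment at `p` is at most the average `ext(A_p)/p`, which is the bound on `θ`.
For `σ` it suffices that `ext(A_p) + (n - p)(gain_p - 1) ≥ 0`: this is clear if `gain_p ≥ 1`, and
if `gain_p = 0` no vertex is undominated, so `ext(A_p) = n - p`.
-/
open Finset
open scoped Classical

/-- The closed `k`-neighborhood of `v`: all vertices at graph distance at most `k`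
from `v` (in particular `v` itself). -/
noncomputable def kNbhd {V : Type*} [Fintype V] (G : SimpleGraph V) (k : ℕ) (v : V) :
    Finset V :=
  Finset.univ.filter (fun u => G.Reachable u v ∧ G.dist u v ≤ k)

/-- `domk G k A` is the number of vertices `k`-hop dominated by `A`. -/
noncomputable def domk {V : Type*} [Fintype V] (G : SimpleGraph V) (k : ℕ) (A : Finset V) :
    ℕ :=
  (A.biUnion (kNbhd G k)).card

/-- `extk G k A` is the number of vertices externally `k`-hop dominated by `A`. -/
noncomputable def extk {V : Type*} [Fintype V] (G : SimpleGraph V) (k : ℕ) (A : Finset V) :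
    ℤ :=
  (domk G k A : ℤ) - (A.card : ℤ)

/-- A greedy sequence for `domk G k` (with `N` greedy steps): `A 0 = ∅` and each
`A (i+1)` is obtained from `A i` by inserting a new vertex maximizing `domk`. -/
def IsGreedySeq {V : Type*} [Fintype V] (G : SimpleGraph V) (k : ℕ) (N : ℕ)
    (A : ℕ → Finset V) : Prop :=
  A 0 = ∅ ∧ ∀ i < N, ∃ v ∉ A i, A (i + 1) = insert v (A i) ∧
    ∀ u ∉ A i, domk G k (insert u (A i)) ≤ domk G k (insert v (A i))

theorem mul_sub_le_sub_zero_of_sub_antitone {E : ℕ → ℤ} {m : ℕ}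
    (hE : ∀ i, i + 2 ≤ m → E (i + 2) - E (i + 1) ≤ E (i + 1) - E i) :
    ∀ p, p + 1 ≤ m → p * (E (p + 1) - E p) ≤ E p - E 0 := by
  intro p
  induction p with
  | zero => simp
  | succ p ih =>
    intro hp
    have hstep := hE p hp
    have hprev := ih (by omega)
    push_cast
    nlinarith [mul_le_mul_of_nonneg_left hstep (Int.natCast_nonneg p)]

section Domination

variable {V : Type*} [Fintype V] (G : SimpleGraph V) (k : ℕ)

theorem mem_kNbhd_self (v : V) : v ∈ kNbhd G k v := by
  simp [kNbhd]

theorem subset_biUnion_kNbhd (A : Finset V) : A ⊆ A.biUnion (kNbhd G k) :=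
  fun a ha => mem_biUnion.mpr ⟨a, ha, mem_kNbhd_self G k a⟩

theorem card_le_domk (A : Finset V) : A.card ≤ domk G k A :=
  card_le_card (subset_biUnion_kNbhd G k A)

theorem extk_nonneg (A : Finset V) : 0 ≤ extk G k A := by
  have := card_le_domk G k A
  unfold extk
  omega

theorem domk_mono {A B : Finset V} (hAB : A ⊆ B) : domk G k A ≤ domk G k B :=
  card_le_card (biUnion_subset_biUnion_of_subset_left _ hAB)

theorem domk_insert (A : Finset V) (u : V) :
    domk G k (insert u A) = domk G k A + (kNbhd G k u \ A.biUnion (kNbhd G k)).card := by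
  rw [domk, domk, biUnion_insert, ← card_sdiff_add_card, Nat.add_comm]

theorem domk_insert_add_domk_le_of_subset {A B : Finset V} (hAB : A ⊆ B) (u : V) :
    domk G k (insert u B) + domk G k A ≤ domk G k (insert u A) + domk G k B := by
  have hgain : (kNbhd G k u \ B.biUnion (kNbhd G k)).card ≤
      (kNbhd G k u \ A.biUnion (kNbhd G k)).card :=
    card_le_card (sdiff_subset_sdiff Subset.rfl (biUnion_subset_biUnion_of_subset_left _ hAB))
  rw [domk_insert, domk_insert]
  omega

/-- A vertex not yet dominated would dominate at least itself, so a set that no single insertion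
improves dominates every vertex. -/
theorem domk_eq_card_of_forall_domk_insert_le {A : Finset V}
    (hA : ∀ u ∉ A, domk G k (insert u A) ≤ domk G k A) : domk G k A = Fintype.card V := by
  suffices A.biUnion (kNbhd G k) = univ by rw [domk, this, card_univ]
  refine eq_univ_iff_forall.mpr fun u => ?_
  by_cases hu : u ∈ A
  · exact subset_biUnion_kNbhd G k A hu
  · by_contra hnot
    have hpos : 0 < (kNbhd G k u \ A.biUnion (kNbhd G k)).card :=
      card_pos.mpr ⟨u, mem_sdiff.mpr ⟨mem_kNbhd_self G k u, hnot⟩⟩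
    have := hA u hu
    rw [domk_insert] at this
    omega

end Domination

namespace IsGreedySeq

variable {V : Type*} [Fintype V] {G : SimpleGraph V} {k N : ℕ} {A : ℕ → Finset V}

theorem subset_succ (hA : IsGreedySeq G k N A) {i : ℕ} (hi : i < N) : A i ⊆ A (i + 1) := by
  obtain ⟨v, -, hv, -⟩ := hA.2 i hi
  exact hv ▸ subset_insert v (A i)

theorem card_eq (hA : IsGreedySeq G k N A) : ∀ p ≤ N, (A p).card = p := by
  intro p
  induction p with
  | zero => simp [hA.1]
  | succ p ih =>
    intro hp
    obtain ⟨v, hvA, hv, -⟩ := hA.2 p (by omega)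
    rw [hv, card_insert_of_notMem hvA, ih (by omega)]

theorem extk_zero (hA : IsGreedySeq G k N A) : extk G k (A 0) = 0 := by
  simp [extk, domk, hA.1]

theorem extk_succ (hA : IsGreedySeq G k N A) {i : ℕ} (hi : i < N) :
    extk G k (A (i + 1)) = extk G k (A i) + (domk G k (A (i + 1)) - domk G k (A i)) - 1 := by
  simp only [extk, hA.card_eq i hi.le, hA.card_eq (i + 1) hi]
  push_cast
  ring

/-- The vertex chosen at step `i + 1` was a candidate at step `i`, and its gain can only shrink
as the set grows (submodularity). -/
theorem domk_add_domk_le (hA : IsGreedySeq G k N A) {i : ℕ} (hi : i + 2 ≤ N) :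
    domk G k (A (i + 2)) + domk G k (A i) ≤ 2 * domk G k (A (i + 1)) := by
  obtain ⟨v, hvA, hv, -⟩ := hA.2 (i + 1) (by omega)
  obtain ⟨w, -, hw, hgreedy⟩ := hA.2 i (by omega)
  have hsub := hA.subset_succ (i := i) (by omega)
  have hchoice := hgreedy v fun h => hvA (hsub h)
  have hsubmod := domk_insert_add_domk_le_of_subset G k hsub v
  rw [← hw] at hchoice
  rw [show A (i + 2) = insert v (A (i + 1)) from hv]
  omega

theorem extk_sub_antitone (hA : IsGreedySeq G k N A) {i : ℕ} (hi : i + 2 ≤ N) :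
    extk G k (A (i + 2)) - extk G k (A (i + 1)) ≤ extk G k (A (i + 1)) - extk G k (A i) := by
  have hconc := hA.domk_add_domk_le hi
  have hsucc : extk G k (A (i + 2)) =
      extk G k (A (i + 1)) + (domk G k (A (i + 2)) - domk G k (A (i + 1))) - 1 :=
    hA.extk_succ (by omega)
  rw [hsucc, hA.extk_succ (i := i) (by omega)]
  omega

theorem domk_eq_card_of_domk_succ_le (hA : IsGreedySeq G k N A) {i : ℕ} (hi : i < N)
    (hstall : domk G k (A (i + 1)) ≤ domk G k (A i)) : domk G k (A i) = Fintype.card V := by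
  obtain ⟨v, -, hv, hgreedy⟩ := hA.2 i hi
  rw [← hv] at hgreedy
  exact domk_eq_card_of_forall_domk_insert_le G k fun u hu => (hgreedy u hu).trans hstall

end IsGreedySeq

theorem greedy_theta_sigma_monotone_general {V : Type*} [Fintype V] (G : SimpleGraph V)
    (k : ℕ) (A : ℕ → Finset V)
    (hA : IsGreedySeq G k (Fintype.card V - 1) A) :
    ∀ p : ℕ, 1 ≤ p → p ≤ Fintype.card V - 2 →
      (p : ℤ) * extk G k (A (p + 1)) ≤ ((p : ℤ) + 1) * extk G k (A p) ∧
      ((Fintype.card V : ℤ) - p - 1) * extk G k (A p) ≤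
        ((Fintype.card V : ℤ) - p) * extk G k (A (p + 1)) := by
  intro p _ hp2
  have hp : p < Fintype.card V - 1 := by omega
  have hstep := hA.extk_succ hp
  have hnonneg := extk_nonneg G k (A p)
  have havg := mul_sub_le_sub_zero_of_sub_antitone (E := fun i => extk G k (A i))
    (fun i hi => hA.extk_sub_antitone hi) p hp
  rw [hA.extk_zero] at havg
  refine ⟨by linarith, ?_⟩
  rcases le_or_gt (domk G k (A (p + 1))) (domk G k (A p)) with hstall | hgrow
  · have hgain : (domk G k (A (p + 1)) : ℤ) - domk G k (A p) = 0 := by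
      have := domk_mono G k (hA.subset_succ hp)
      omega
    have hext : extk G k (A p) = Fintype.card V - p := by
      rw [extk, hA.domk_eq_card_of_domk_succ_le hp hstall, hA.card_eq p hp.le]
    rw [hstep, hgain, hext]
    exact le_of_eq (by ring)
  · have hn : (p : ℤ) + 2 ≤ Fintype.card V := by omega
    rw [hstep]
    nlinarith

/-- along a greedy sequence, θ_p = ext(A_p)/p is nonincreasing and
σ_p = ext(A_p)/(n-p) is nondecreasing. -/
theorem greedy_theta_sigma_monotone {V : Type*} [Fintype V] (G : SimpleGraph V)
    (k : ℕ) (hk : 1 ≤ k) (A : ℕ → Finset V)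
    (hA : IsGreedySeq G k (Fintype.card V - 1) A) :
    ∀ p : ℕ, 1 ≤ p → p ≤ Fintype.card V - 2 →
      (p : ℤ) * extk G k (A (p + 1)) ≤ ((p : ℤ) + 1) * extk G k (A p) ∧
      ((Fintype.card V : ℤ) - p - 1) * extk G k (A p) ≤
        ((Fintype.card V : ℤ) - p) * extk G k (A (p + 1)) :=
  greedy_theta_sigma_monotone_general G k A hA
end

section
/- Let G be a finite simple undirected graph with n vertices, k ≥ 1 an integer, and (A_p)_{p=0}^{n} a greedy sequence for dom. Then the marginal gains of the greedy sequence are nonincreasing: for every 1 ≤ i ≤ n − 1, dom(A_{i+1}) − dom(A_i) ≤ dom(A_i) − dom(A_{i−1}). -/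
/-!
Coverage functions `A ↦ #(A.biUnion N)` are submodular: the gain of adding `v` is the number of
points of `N v` not yet covered, which can only shrink as `A` grows. For a greedy sequence, the
vertex `v` added at step `i + 1` therefore gains at most what it would have gained at step `i`,
and by greedy maximality that is at most what the vertex actually chosen at step `i` gained.
-/

open Finset
open scoped Classical

section Coverage

variable {α β : Type*} [DecidableEq α] [DecidableEq β] (N : α → Finset β)

theorem card_biUnion_insert_s2 (A : Finset α) (v : α) :
    #((insert v A).biUnion N) = #(N v \ A.biUnion N) + #(A.biUnion N) := by
  rw [biUnion_insert, card_sdiff_add_card]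

theorem card_biUnion_insert_add_le {S T : Finset α} (hST : S ⊆ T) (v : α) :
    #((insert v T).biUnion N) + #(S.biUnion N) ≤ #((insert v S).biUnion N) + #(T.biUnion N) := by
  have hgain : #(N v \ T.biUnion N) ≤ #(N v \ S.biUnion N) :=
    card_le_card (sdiff_subset_sdiff subset_rfl (biUnion_subset_biUnion_of_subset_left N hST))
  rw [card_biUnion_insert_s2, card_biUnion_insert_s2]
  omega

end Coverage

theorem greedy_marginal_gains_nonincreasing_general {V : Type*} [Fintype V] (G : SimpleGraph V)
    (k : ℕ) (A : ℕ → Finset V)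
    (hA : IsGreedySeq G k (Fintype.card V) A) :
    ∀ i : ℕ, 1 ≤ i → i ≤ Fintype.card V - 1 →
      (domk G k (A (i + 1)) : ℤ) - (domk G k (A i) : ℤ) ≤
        (domk G k (A i) : ℤ) - (domk G k (A (i - 1)) : ℤ) := by
  intro i hi1 hi2
  obtain ⟨v, hv, hAv, -⟩ := hA.2 i (by omega)
  obtain ⟨w, -, hAw, hw_max⟩ := hA.2 (i - 1) (by omega)
  rw [Nat.sub_add_cancel hi1] at hAw
  have hsub : A (i - 1) ⊆ A i := hAw ▸ subset_insert w _
  have hsubmod : domk G k (insert v (A i)) + domk G k (A (i - 1)) ≤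
      domk G k (insert v (A (i - 1))) + domk G k (A i) :=
    card_biUnion_insert_add_le (kNbhd G k) hsub v
  have hgreedy : domk G k (insert v (A (i - 1))) ≤ domk G k (A i) :=
    hAw ▸ hw_max v fun h => hv (hsub h)
  rw [hAv]
  omega

/-- the marginal gains of the greedy sequence are nonincreasing. -/
theorem greedy_marginal_gains_nonincreasing {V : Type*} [Fintype V] (G : SimpleGraph V)
    (k : ℕ) (hk : 1 ≤ k) (A : ℕ → Finset V)
    (hA : IsGreedySeq G k (Fintype.card V) A) :
    ∀ i : ℕ, 1 ≤ i → i ≤ Fintype.card V - 1 →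
      (domk G k (A (i + 1)) : ℤ) - (domk G k (A i) : ℤ) ≤
        (domk G k (A i) : ℤ) - (domk G k (A (i - 1)) : ℤ) :=
  greedy_marginal_gains_nonincreasing_general G k A hA
end

section
/- Let k ≥ 1 and let T be a finite rooted tree with n ≥ k + 2 vertices such that every child subtree of the root has at most k + 1 vertices. Then there exists a vertex v of T such that the number of vertices of T at distance between 1 and k from v is at least k + 1 and at least (k/(k+1)) · (n − 1); that is, v externally k-hop dominates at least max{k + 1, (k/(k+1))(n − 1)} vertices of T. -/
open Finset
open scoped Classical

/-!
Every vertex lies at depth at most `k + 1`, since the geodesic from the root `r` to it stays in a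
single child subtree. A child subtree containing a vertex `u` at depth `k + 1` is then exactly the
geodesic to `u`, so distinct vertices at depth `k + 1` have disjoint sets of `k` ancestors at
depths `1, …, k`. Hence `k |A| ≤ |B|` for the layer `A` at depth `k + 1` and the set `B` of
vertices at depths `1, …, k`, while `|A| + |B| = n - 1`. If `|B| ≥ k + 1` the root is a good
dominator. Otherwise `|A| = 1` and `n = k + 2`: the tree is the path from `r` to `u`, and the
child of `r` on it reaches the other `k + 1` vertices within distance `k`.
-/

theorem div_succ_mul_sub_one_le {k n b : ℕ} (hn : 1 ≤ n) (h : k * (n - 1) ≤ (k + 1) * b) :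
    (k : ℝ) / (k + 1) * ((n : ℝ) - 1) ≤ b := by
  rw [div_mul_eq_mul_div, div_le_iff₀ (by positivity)]
  have : ((k * (n - 1) : ℕ) : ℝ) ≤ ((k + 1) * b : ℕ) := by exact_mod_cast h
  push_cast [Nat.cast_sub hn] at this
  linarith

namespace SimpleGraph

variable {V : Type*} {G : SimpleGraph V}

theorem Walk.dist_getVert_getVert_of_length_eq_dist {u v : V} {p : G.Walk u v}
    (hp : p.length = G.dist u v) {i j : ℕ} (hij : i ≤ j) (hj : j ≤ p.length) :
    G.dist (p.getVert i) (p.getVert j) = j - i := by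
  have := length_eq_dist_of_subwalk hp (((p.drop i).isSubwalk_take (j - i)).trans
    (p.isSubwalk_drop i))
  simp only [take_length, drop_length, drop_getVert] at this
  rwa [Nat.add_sub_cancel' hij, min_eq_left (by omega), eq_comm] at this

theorem Walk.dist_getVert_of_length_eq_dist {u v : V} {p : G.Walk u v}
    (hp : p.length = G.dist u v) {i : ℕ} (hi : i ≤ p.length) : G.dist u (p.getVert i) = i := by
  simpa using p.dist_getVert_getVert_of_length_eq_dist hp (Nat.zero_le i) hi

theorem Walk.IsPath.card_image_getVert {u v : V} {p : G.Walk u v} (hp : p.IsPath)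
    {s : Finset ℕ} (hs : ∀ i ∈ s, i ≤ p.length) : (s.image p.getVert).card = s.card :=
  card_image_of_injOn fun _ hi _ hj => hp.getVert_injOn (hs _ hi) (hs _ hj)

theorem Walk.card_image_getVert_Icc {u v : V} {p : G.Walk u v} (hp : p.length = G.dist u v) :
    ((Icc 1 p.length).image p.getVert).card = p.length := by
  rw [(p.isPath_of_length_eq_dist hp).card_image_getVert (fun i hi => (mem_Icc.1 hi).2),
    Nat.card_Icc, Nat.add_sub_cancel]

variable [Fintype V]

noncomputable def childSubtree (G : SimpleGraph V) (r c : V) : Finset V :=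
  univ.filter fun u => G.dist r u = G.dist c u + 1

noncomputable def externalBall (G : SimpleGraph V) (v : V) (k : ℕ) : Finset V :=
  univ.filter fun u => 1 ≤ G.dist v u ∧ G.dist v u ≤ k

noncomputable def sphere (G : SimpleGraph V) (v : V) (m : ℕ) : Finset V :=
  univ.filter fun u => G.dist v u = m

theorem IsAcyclic.eq_of_mem_childSubtree (hG : G.IsAcyclic) {r c c' w : V} (hc : G.Adj r c)
    (hc' : G.Adj r c') (hw : w ∈ G.childSubtree r c) (hw' : w ∈ G.childSubtree r c') :
    c = c' := by
  have first_step : ∀ x, G.Adj r x → w ∈ G.childSubtree r x →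
      ∃ q : G.Path r w, q.1.getVert 1 = x := by
    intro x hx hwx
    simp only [childSubtree, mem_filter, mem_univ, true_and] at hwx
    have hxw : G.Reachable x w :=
      hx.symm.reachable.trans (Reachable.of_dist_ne_zero (by omega))
    obtain ⟨q, hq⟩ := hxw.exists_walk_length_eq_dist
    refine ⟨⟨q.cons hx, (q.cons hx).isPath_of_length_eq_dist ?_⟩, by simp⟩
    rw [Walk.length_cons, hq, hwx]
  obtain ⟨q, rfl⟩ := first_step c hc hw
  obtain ⟨q', rfl⟩ := first_step c' hc' hw'
  rw [(hG.subsingleton_path r w).elim q q']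

section Geodesics

variable {r u : V} {p : G.Walk r u}

theorem Walk.getVert_mem_childSubtree (hp : p.length = G.dist r u) {i : ℕ} (hi : 1 ≤ i)
    (hi' : i ≤ p.length) :
    p.getVert i ∈ G.childSubtree r (p.getVert 1) := by
  have h0 := p.dist_getVert_of_length_eq_dist hp hi'
  have h1 := p.dist_getVert_getVert_of_length_eq_dist hp hi hi'
  simp only [childSubtree, mem_filter, mem_univ, true_and, h0, h1]
  omega

theorem Walk.image_getVert_subset_childSubtree (hp : p.length = G.dist r u) :
    (Icc 1 p.length).image p.getVert ⊆ G.childSubtree r (p.getVert 1) := by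
  intro w hw
  obtain ⟨i, hi, rfl⟩ := mem_image.1 hw
  rw [mem_Icc] at hi
  exact p.getVert_mem_childSubtree hp hi.1 hi.2

theorem Walk.length_le_card_childSubtree (hp : p.length = G.dist r u) :
    p.length ≤ (G.childSubtree r (p.getVert 1)).card :=
  p.card_image_getVert_Icc hp ▸ card_le_card (p.image_getVert_subset_childSubtree hp)

theorem Walk.eq_of_mem_childSubtree (hp : p.length = G.dist r u)
    (hcard : (G.childSubtree r (p.getVert 1)).card ≤ p.length)
    {w : V} (hw : w ∈ G.childSubtree r (p.getVert 1)) (hdist : G.dist r w = p.length) :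
    w = u := by
  rw [← eq_of_subset_of_card_le (p.image_getVert_subset_childSubtree hp)
    (by rwa [p.card_image_getVert_Icc hp])] at hw
  obtain ⟨i, hi, rfl⟩ := mem_image.1 hw
  rw [p.dist_getVert_of_length_eq_dist hp (mem_Icc.1 hi).2] at hdist
  rw [hdist, Walk.getVert_length]

theorem Walk.le_card_externalBall_getVert_one (hp : p.length = G.dist r u) {k : ℕ}
    (hk : 1 ≤ k) (hlen : p.length = k + 1) : k + 1 ≤ (G.externalBall (p.getVert 1) k).card := by
  have hsub : ((range (k + 2)).erase 1).image p.getVert ⊆ G.externalBall (p.getVert 1) k := by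
    intro w hw
    obtain ⟨i, hi, rfl⟩ := mem_image.1 hw
    rw [mem_erase, mem_range] at hi
    simp only [externalBall, mem_filter, mem_univ, true_and]
    rcases Nat.eq_zero_or_pos i with rfl | hi0
    · rw [dist_comm, p.dist_getVert_getVert_of_length_eq_dist hp (Nat.zero_le 1) (by omega)]
      omega
    · rw [p.dist_getVert_getVert_of_length_eq_dist hp hi0 (by omega)]
      omega
  have hcard := (p.isPath_of_length_eq_dist hp).card_image_getVert
    (s := (range (k + 2)).erase 1) (fun i hi => by rw [mem_erase, mem_range] at hi; omega)
  rw [card_erase_of_mem (mem_range.2 (by omega)), card_range] at hcard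
  have := card_le_card hsub
  omega

end Geodesics

variable {r : V} {k : ℕ}

theorem Connected.dist_le_of_card_childSubtree_le (hG : G.Connected)
    (hchild : ∀ c, G.Adj r c → (G.childSubtree r c).card ≤ k) (u : V) : G.dist r u ≤ k := by
  obtain ⟨p, hp⟩ := hG.exists_walk_length_eq_dist r u
  rcases Nat.eq_zero_or_pos p.length with h0 | hpos
  · omega
  exact hp ▸ (p.length_le_card_childSubtree hp).trans
    (hchild _ (p.adj_snd (Walk.not_nil_iff_lt_length.2 hpos)))

theorem Connected.card_sphere_add_card_externalBall (hG : G.Connected)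
    (hdepth : ∀ u, G.dist r u ≤ k + 1) :
    (G.sphere r (k + 1)).card + (G.externalBall r k).card = Fintype.card V - 1 := by
  rw [← card_union_of_disjoint, ← card_univ, ← card_erase_of_mem (mem_univ r)]
  · congr 1
    ext u
    have := hdepth u
    have := hG.dist_eq_zero_iff (u := r) (v := u)
    simp only [sphere, externalBall, mem_union, mem_filter, mem_univ, true_and, mem_erase]
    grind
  · rw [Finset.disjoint_left]
    intro u hu hu'
    simp only [sphere, externalBall, mem_filter, mem_univ, true_and] at hu hu'
    omega

theorem IsTree.eq_of_getVert_eq {m : ℕ} (hT : G.IsTree)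
    (hchild : ∀ c, G.Adj r c → (G.childSubtree r c).card ≤ m)
    {u u' : V} {p : G.Walk r u} {p' : G.Walk r u'} (hp : p.length = G.dist r u)
    (hp' : p'.length = G.dist r u') (hm : p.length = m) (hm' : p'.length = m) {i j : ℕ}
    (hi : 1 ≤ i) (hi' : i ≤ m) (hj : 1 ≤ j) (hj' : j ≤ m)
    (heq : p.getVert i = p'.getVert j) :
    u = u' := by
  have hadj := p.adj_snd (Walk.not_nil_iff_lt_length.2 (by omega))
  have hadj' := p'.adj_snd (Walk.not_nil_iff_lt_length.2 (by omega))
  have hsnd : p.getVert 1 = p'.getVert 1 :=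
    hT.isAcyclic.eq_of_mem_childSubtree hadj hadj'
      (p.getVert_mem_childSubtree hp hi (by omega))
      (heq ▸ p'.getVert_mem_childSubtree hp' hj (by omega))
  have hu' : u' ∈ G.childSubtree r (p.getVert 1) := by
    simpa [hsnd] using p'.getVert_mem_childSubtree hp' (i := p'.length) (by omega) le_rfl
  exact (p.eq_of_mem_childSubtree hp (hm ▸ hchild _ hadj) hu' (by omega)).symm

theorem IsTree.mul_card_sphere_le_card_externalBall (hT : G.IsTree)
    (hchild : ∀ c, G.Adj r c → (G.childSubtree r c).card ≤ k + 1) :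
    k * (G.sphere r (k + 1)).card ≤ (G.externalBall r k).card := by
  choose P hP using hT.connected.exists_walk_length_eq_dist r
  have hlen : ∀ u ∈ G.sphere r (k + 1), (P u).length = k + 1 := fun u hu => by
    rw [hP]; simpa [sphere] using hu
  have hdist : ∀ u ∈ G.sphere r (k + 1), ∀ i ≤ k, G.dist r ((P u).getVert i) = i :=
    fun u hu i hi => (P u).dist_getVert_of_length_eq_dist (hP u) (by rw [hlen u hu]; omega)
  calc k * (G.sphere r (k + 1)).card = (G.sphere r (k + 1) ×ˢ Icc 1 k).card := by
        rw [card_product, Nat.card_Icc, Nat.add_sub_cancel, mul_comm]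
    _ ≤ (G.externalBall r k).card := by
      refine card_le_card_of_injOn (fun x => (P x.1).getVert x.2) ?_ ?_
      · rintro ⟨u, i⟩ hx
        simp only [coe_product, coe_Icc, Set.mem_prod, Set.mem_Icc, mem_coe] at hx
        simp only [externalBall, coe_filter, Set.mem_ofPred_eq, mem_univ, true_and,
          hdist u hx.1 i hx.2.2]
        omega
      · rintro ⟨u, i⟩ hx ⟨u', i'⟩ hx' heq
        simp only [coe_product, coe_Icc, Set.mem_prod, Set.mem_Icc, mem_coe] at hx hx' heq
        have hii' : i = i' := by rw [← hdist u hx.1 i hx.2.2, heq, hdist u' hx'.1 i' hx'.2.2]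
        subst hii'
        rw [hT.eq_of_getVert_eq hchild (hP u) (hP u') (hlen u hx.1) (hlen u' hx'.1) hx.2.1
          (by omega) hx'.2.1 (by omega) heq]

end SimpleGraph

/-- if a tree has `n ≥ k + 2` vertices and every child subtree of the
root has at most `k + 1` vertices, then some vertex externally `k`-hop dominates at
least `max {k + 1, (k/(k+1)) (n - 1)}` vertices.  (A vertex `u` belongs to the child
subtree of a child `c` of the root `r` iff `dist r u = dist c u + 1`.) -/
theorem exists_good_external_dominator {V : Type*} [Fintype V]
    (G : SimpleGraph V) (hT : G.IsTree) (r : V) (k : ℕ) (hk : 1 ≤ k)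
    (hn : k + 2 ≤ Fintype.card V)
    (hchild : ∀ c : V, G.Adj r c →
      (Finset.univ.filter (fun u => G.dist r u = G.dist c u + 1)).card ≤ k + 1) :
    ∃ v : V,
      k + 1 ≤ (Finset.univ.filter (fun u => 1 ≤ G.dist v u ∧ G.dist v u ≤ k)).card ∧
      (k : ℝ) / (k + 1) * ((Fintype.card V : ℝ) - 1) ≤
        ((Finset.univ.filter (fun u => 1 ≤ G.dist v u ∧ G.dist v u ≤ k)).card : ℝ) := by
  have hG := hT.connected
  have hdepth := hG.dist_le_of_card_childSubtree_le hchild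
  have hsum := hG.card_sphere_add_card_externalBall hdepth
  have hcount := hT.mul_card_sphere_le_card_externalBall hchild
  by_cases hB : k + 1 ≤ (G.externalBall r k).card
  · exact ⟨r, hB, div_succ_mul_sub_one_le (b := (G.externalBall r k).card) (by omega)
      (by rw [← hsum]; nlinarith)⟩
  obtain ⟨u, hu⟩ : (G.sphere r (k + 1)).Nonempty := card_pos.1 (by omega)
  obtain ⟨p, hp⟩ := hG.exists_walk_length_eq_dist r u
  have hball :=
    p.le_card_externalBall_getVert_one hp hk (by simpa [hp, SimpleGraph.sphere] using hu)
  have hA : (G.sphere r (k + 1)).card ≤ 1 := by nlinarith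
  have hcard : Fintype.card V - 1 = k + 1 := by omega
  exact ⟨p.getVert 1, hball, div_succ_mul_sub_one_le
    (b := (G.externalBall (p.getVert 1) k).card) (by omega) (by rw [hcard]; nlinarith)⟩
end

section
/- Let k ≥ 1, l ≥ 2 be integers and let T be a tree in the family S_{k,l} (so T has k + 2l + 1 vertices). Then there exists a set D of vertices of T with |D| = ⌊(l+1)/2⌋ such that ext(D) ≥ k + l; moreover, k + l ≥ 2⌊(l+1)/2⌋ and k + l ≥ (3/5) · (k + 2l + 1 − ⌊(l+1)/2⌋). -/
/-!
Take `D` to consist of the centre `c` together with, for `m = ⌊(l+1)/2⌋ - 1` of the vertices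
at distance two from `c`, a common neighbour of `c` and that vertex (padded to `m + 1`
vertices if these coincide). Then `D` dominates the `k + l + 1` vertices of `N[c]` and the `m`
chosen vertices, so `ext(D) ≥ (k + l + 1 + m) - (m + 1) = k + l`. The two numerical claims
are elementary arithmetic in `k` and `l`.
-/

open Finset
open scoped Classical

/-- The connected component of `c` in `F` is a tree of the family `S_{a,b}` with
center `c`: every vertex of the component is within distance 2 of `c`, `c` has
`a + b` neighbors, exactly `b` vertices are at distance 2 from `c`, and every
neighbor of `c` has at most one neighbor other than `c` (in an acyclic graph this
pins the structure of `S_{a,b}`: `a` pendant leaves and `b` legs of length two). -/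
def IsSFamilyComponent {V : Type*} [Fintype V] (F : SimpleGraph V) (c : V)
    (a b : ℕ) : Prop :=
  (∀ u : V, F.Reachable c u → F.dist c u ≤ 2) ∧
  (Finset.univ.filter (fun u => F.Adj c u)).card = a + b ∧
  (Finset.univ.filter (fun u => F.dist c u = 2)).card = b ∧
  ∀ w : V, F.Adj c w → (Finset.univ.filter (fun u => F.Adj w u ∧ u ≠ c)).card ≤ 1

theorem SimpleGraph.exists_adj_adj_of_dist_eq_two {V : Type*} {G : SimpleGraph V} {u v : V}
    (h : G.dist u v = 2) :
    ∃ w, G.Adj u w ∧ G.Adj w v := by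
  have hedist : G.edist u v = 2 := by
    rw [← (Reachable.of_dist_ne_zero (by omega)).coe_dist_eq_edist, h]
    rfl
  obtain ⟨-, -, w, hw⟩ := edist_eq_two_iff.mp hedist
  rw [mem_commonNeighbors] at hw
  exact ⟨w, hw.1, hw.2.symm⟩

section

variable {V : Type*} [Fintype V] {G : SimpleGraph V}

theorem mem_kNbhd_one {u v : V} : u ∈ kNbhd G 1 v ↔ u = v ∨ G.Adj v u := by
  simp only [kNbhd, mem_filter, mem_univ, true_and]
  constructor
  · rintro ⟨hr, hd⟩
    interval_cases h : G.dist u v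
    · exact Or.inl (hr.dist_eq_zero_iff.mp h)
    · exact Or.inr (SimpleGraph.dist_eq_one_iff_adj.mp h).symm
  · rintro (rfl | hadj)
    · simp
    · exact ⟨hadj.symm.reachable, (SimpleGraph.dist_eq_one_iff_adj.mpr hadj.symm).le⟩

theorem card_kNbhd_one (v : V) : #(kNbhd G 1 v) = #{u | G.Adj v u} + 1 := by
  have : kNbhd G 1 v = insert v ({u | G.Adj v u} : Finset V) := by
    ext u
    simp [mem_kNbhd_one]
  rw [this, card_insert_of_notMem (by simp)]

theorem card_adj_add_card_add_one_le_domk_one {c : V} {D S : Finset V} (hc : c ∈ D)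
    (hS : ∀ x ∈ S, G.dist c x = 2) (hSD : ∀ x ∈ S, ∃ w ∈ D, G.Adj w x) :
    #{u | G.Adj c u} + #S + 1 ≤ domk G 1 D := by
  have hdisj : Disjoint (kNbhd G 1 c) S := by
    refine disjoint_left.mpr fun x hxc hxS => ?_
    have hx := hS x hxS
    rcases mem_kNbhd_one.mp hxc with rfl | hadj
    · simp at hx
    · rw [SimpleGraph.dist_eq_one_iff_adj.mpr hadj] at hx
      omega
  have hsub : kNbhd G 1 c ∪ S ⊆ D.biUnion (kNbhd G 1) := by
    intro x hx
    rcases mem_union.mp hx with hx | hx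
    · exact mem_biUnion.mpr ⟨c, hc, hx⟩
    · obtain ⟨w, hwD, hwx⟩ := hSD x hx
      exact mem_biUnion.mpr ⟨w, hwD, mem_kNbhd_one.mpr (Or.inr hwx)⟩
  calc #{u | G.Adj c u} + #S + 1 = #(kNbhd G 1 c ∪ S) := by
        rw [card_union_of_disjoint hdisj, card_kNbhd_one]
        ring
    _ ≤ domk G 1 D := card_le_card hsub

theorem card_adj_le_extk_one {c : V} {D S : Finset V} (hc : c ∈ D)
    (hS : ∀ x ∈ S, G.dist c x = 2) (hSD : ∀ x ∈ S, ∃ w ∈ D, G.Adj w x)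
    (hD : #D ≤ #S + 1) :
    (#{u | G.Adj c u} : ℤ) ≤ extk G 1 D := by
  have := card_adj_add_card_add_one_le_domk_one hc hS hSD
  unfold extk
  omega

theorem exists_card_eq_forall_exists_adj {c : V} {S : Finset V}
    (hS : ∀ x ∈ S, G.dist c x = 2) :
    ∃ D : Finset V, c ∈ D ∧ #D = #S + 1 ∧ ∀ x ∈ S, ∃ w ∈ D, G.Adj w x := by
  choose f hf using fun x : S => SimpleGraph.exists_adj_adj_of_dist_eq_two (hS x x.2)
  have hD₀ : #(insert c (univ.image f)) ≤ #S + 1 :=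
    calc #(insert c (univ.image f)) ≤ #(univ.image f) + 1 := card_insert_le _ _
      _ ≤ #S + 1 := by simpa using card_image_le (s := (univ : Finset S)) (f := f)
  have hcS : c ∉ S := fun h => by simpa using hS c h
  have hV : #S + 1 ≤ #(univ : Finset V) := by
    rw [← card_insert_of_notMem hcS]
    exact card_le_univ _
  obtain ⟨D, hD₀D, -, hDcard⟩ := exists_subsuperset_card_eq (subset_univ _) hD₀ hV
  refine ⟨D, hD₀D (mem_insert_self _ _), hDcard, fun x hx => ⟨f ⟨x, hx⟩, ?_, (hf _).2⟩⟩
  exact hD₀D (mem_insert_of_mem (mem_image_of_mem _ (mem_univ _)))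

end

theorem ext_dominators_in_S_family_tree_general {V : Type*} [Fintype V]
    (T : SimpleGraph V) (c : V) (k l : ℕ) (hk : 1 ≤ k) (hl : 2 ≤ l)
    (hS : IsSFamilyComponent T c k l) :
    (∃ D : Finset V, D.card = (l + 1) / 2 ∧ ((k : ℤ) + l) ≤ extk T 1 D) ∧
    2 * ((l + 1) / 2) ≤ k + l ∧
    (3 : ℝ) / 5 * ((k : ℝ) + 2 * l + 1 - (((l + 1) / 2 : ℕ) : ℝ)) ≤ (k : ℝ) + l := by
  obtain ⟨-, hdeg, hdist2, -⟩ := hS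
  obtain ⟨S, hSsub, hScard⟩ :=
    exists_subset_card_eq (s := {u | T.dist c u = 2}) (n := (l + 1) / 2 - 1) (by omega)
  have hSdist : ∀ x ∈ S, T.dist c x = 2 := fun x hx => (mem_filter.mp (hSsub hx)).2
  obtain ⟨D, hcD, hDcard, hSD⟩ := exists_card_eq_forall_exists_adj hSdist
  have hext := card_adj_le_extk_one hcD hSdist hSD hDcard.le
  refine ⟨⟨D, by omega, by rw [hdeg] at hext; exact_mod_cast hext⟩, by omega, ?_⟩
  have : (l : ℝ) + 3 ≤ 2 * k + 3 * (((l + 1) / 2 : ℕ) : ℝ) := by exact_mod_cast (by omega)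
  linarith

/-- in a tree `T ∈ S_{k,l}` with `k ≥ 1`, `l ≥ 2` (so `T` has
`k + 2l + 1` vertices) there is a set `D` of `⌊(l+1)/2⌋` dominators externally
dominating at least `k + l` vertices; moreover `k + l ≥ 2⌊(l+1)/2⌋` and
`k + l ≥ (3/5)(k + 2l + 1 - ⌊(l+1)/2⌋)`. -/
theorem ext_dominators_in_S_family_tree {V : Type*} [Fintype V]
    (T : SimpleGraph V) (hT : T.IsTree) (c : V) (k l : ℕ) (hk : 1 ≤ k) (hl : 2 ≤ l)
    (hS : IsSFamilyComponent T c k l)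
    (hcard : Fintype.card V = k + 2 * l + 1) :
    (∃ D : Finset V, D.card = (l + 1) / 2 ∧ ((k : ℤ) + l) ≤ extk T 1 D) ∧
    2 * ((l + 1) / 2) ≤ k + l ∧
    (3 : ℝ) / 5 * ((k : ℝ) + 2 * l + 1 - (((l + 1) / 2 : ℕ) : ℝ)) ≤ (k : ℝ) + l :=
  ext_dominators_in_S_family_tree_general T c k l hk hl hS
end
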